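/- arXiv:1706.07747 — 2 statements merged into one kernel-verified Lean document; each statement's English description precedes it below -/
import Mathlib

section
/- For every x with 0 ≤ x ≤ C and every demand d ≥ 1, the number of exact link states with occupancy x that contain a run of at least d consecutive free tokens (the non-blocking states NB(x,d)) equals Σ_{n} (N(n)! / ∏_t n_t!) · W(n), where the sum ranges over all patterns n = (n_1,…,n_T) ∈ ℕ^T with Σ_t n_t·d_t = x, N(n) := Σ_t n_t, E := C − x, and W(n) := Σ_{i=1}^{N(n)+1} (−1)^{i+1} · C(N(n)+1, i) · C(E + N(n) − i·d, N(n)), with E + N(n) − i·d interpreted as an integer and binomial coefficients with upper argument less than the lower argument taken as 0. (This is Theorem 2 of the paper: the count of non-blocking exact link states for a class with demand d in occupancy state x under the random-fit policy.) -/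
/-- Tokens of an exact link state: `none` is a free slice (weight 1),
`some t` is a connection of type `t` (weight `dem t`). -/
abbrev Token (T : ℕ) := Option (Fin T)

def tokenWeight {T : ℕ} (dem : Fin T → ℕ) (o : Token T) : ℕ := o.elim 1 dem

def tokenOcc {T : ℕ} (dem : Fin T → ℕ) (o : Token T) : ℕ := o.elim 0 dem

/-- Binomial coefficient with an integer upper argument: `0` whenever the upper
argument is negative (and, via `Nat.choose`, whenever it is less than the lower one). -/
def intChoose (p : ℤ) (q : ℕ) : ℤ := if p < 0 then 0 else (p.toNat.choose q : ℤ)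

/-!
A state with `N` non-free tokens is the same thing as the word `f` of those tokens together
with the lengths `g 0, …, g N` of the (possibly empty) runs of free tokens before, between and
after them (`List.ofGaps`). For a pattern `n` there are `N! / ∏ n_t!` words, and the gap vectors
are the compositions of `E` into `N + 1` parts; the state is non-blocking iff some part is at
least `d`. Inclusion–exclusion over the set of parts that are at least `d`, after subtracting
`d` from each of them, counts these compositions as `W(n)`.
-/

open Finset

namespace List

variable {α : Type*}

lemma eq_nil_of_prefix_cons_of_notMem {b : α} {l w : List α} (h : l <+: b :: w)
    (hb : b ∉ l) : l = [] := by
  cases l with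
  | nil => rfl
  | cons c l =>
    obtain ⟨rfl, -⟩ := cons_prefix_cons.1 h
    simp at hb

lemma infix_append_cons_iff_of_notMem {b : α} {l u v : List α} (hb : b ∉ l) :
    l <:+: u ++ b :: v ↔ l <:+: u ∨ l <:+: v := by
  constructor
  · intro h
    rcases infix_append_iff.1 h with h | h | ⟨l₁, l₂, rfl, h₁, h₂⟩
    · exact .inl h
    · rcases infix_cons_iff.1 h with h | h
      · exact .inl (eq_nil_of_prefix_cons_of_notMem h hb ▸ nil_infix)
      · exact .inr h
    · rw [eq_nil_of_prefix_cons_of_notMem h₂ fun hm => hb (mem_append_right _ hm), append_nil]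
      exact .inl h₁.isInfix
  · rintro (h | h)
    · exact infix_append_of_infix_left h
    · exact infix_append_of_infix_right (infix_cons h)

lemma count_cons_eq_iff_count_eq_update [DecidableEq α] {a : α} {l : List α} {n : α → ℕ}
    (ha : n a ≠ 0) :
    (∀ b, (a :: l).count b = n b) ↔ ∀ b, l.count b = Function.update n a (n a - 1) b := by
  refine forall_congr' fun b => ?_
  rcases eq_or_ne b a with rfl | hb
  · rw [count_cons_self, Function.update_self]
    omega
  · rw [count_cons_of_ne hb.symm, Function.update_of_ne hb]

section Fintype

variable [Fintype α] [DecidableEq α]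

lemma sum_count_eq_length (l : List α) : ∑ a, l.count a = l.length := by
  simpa using Multiset.sum_count_eq_card (s := univ) (m := (l : Multiset α)) fun a _ => mem_univ a

lemma sum_map_eq_count_none_add (s : List (Option α)) (h : Option α → ℕ) :
    (s.map h).sum = s.count none * h none + ∑ a, s.count (some a) * h (some a) := by
  induction s with
  | nil => simp
  | cons o s ih =>
    cases o with
    | none =>
      simp only [map_cons, sum_cons, ih, count_cons_self, ne_eq, reduceCtorEq, not_false_eq_true,
        count_cons_of_ne]
      ring
    | some b =>
      simp only [map_cons, sum_cons, ih, ne_eq, reduceCtorEq, not_false_eq_true, count_cons_of_ne,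
        count_cons, beq_iff_eq, Option.some.injEq, add_mul, sum_add_distrib, ite_mul, one_mul,
        zero_mul, sum_ite_eq, mem_univ, if_true]
      ring

end Fintype

def ofRuns : ℕ → List (α × ℕ) → List (Option α)
  | g, [] => replicate g none
  | g, (a, g') :: p => replicate g none ++ some a :: ofRuns g' p

def toRuns : List (Option α) → ℕ × List (α × ℕ)
  | [] => (0, [])
  | none :: s => ((toRuns s).1 + 1, (toRuns s).2)
  | some a :: s => (0, (a, (toRuns s).1) :: (toRuns s).2)

lemma ofRuns_succ (g : ℕ) (p : List (α × ℕ)) : ofRuns (g + 1) p = none :: ofRuns g p := by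
  rcases p with _ | ⟨⟨a, g'⟩, p⟩ <;> rfl

lemma ofRuns_toRuns (s : List (Option α)) : ofRuns (toRuns s).1 (toRuns s).2 = s := by
  induction s with
  | nil => rfl
  | cons o s ih =>
    cases o with
    | none => rw [toRuns, ofRuns_succ, ih]
    | some a => simp only [toRuns, ofRuns, replicate_zero, nil_append, ih]

lemma toRuns_ofRuns (g : ℕ) (p : List (α × ℕ)) : toRuns (ofRuns g p) = (g, p) := by
  induction p generalizing g with
  | nil => induction g with
    | zero => rfl
    | succ g ih => rw [ofRuns_succ, toRuns, ih]
  | cons q p ihp => induction g with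
    | zero => simp only [ofRuns, replicate_zero, nil_append, toRuns, ihp]
    | succ g ih => rw [ofRuns_succ, toRuns, ih]

lemma count_some_ofRuns [DecidableEq α] (g : ℕ) (p : List (α × ℕ)) (a : α) :
    (ofRuns g p).count (some a) = (p.map Prod.fst).count a := by
  induction p generalizing g with
  | nil => simp [ofRuns, count_replicate]
  | cons q p ih => simp [ofRuns, count_cons, count_replicate, ih]

lemma count_none_ofRuns [DecidableEq α] (g : ℕ) (p : List (α × ℕ)) :
    (ofRuns g p).count none = g + (p.map Prod.snd).sum := by
  induction p generalizing g with
  | nil => simp [ofRuns]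
  | cons q p ih => simp [ofRuns, ih]

lemma replicate_none_infix_ofRuns_iff (d g : ℕ) (p : List (α × ℕ)) :
    replicate d none <:+: ofRuns g p ↔ d ≤ g ∨ ∃ q ∈ p, d ≤ q.2 := by
  induction p generalizing g with
  | nil => simp [ofRuns, infix_replicate_iff]
  | cons q p ih =>
    rw [ofRuns, infix_append_cons_iff_of_notMem (by simp), infix_replicate_iff, ih]
    simp

variable {N : ℕ}

/-- `none^(g 0), some (f 0), none^(g 1), …, some (f (N - 1)), none^(g N)`. -/
def ofGaps (f : Fin N → α) (g : Fin (N + 1) → ℕ) : List (Option α) :=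
  ofRuns (g 0) (ofFn fun j => (f j, g j.succ))

lemma ofGaps_injective :
    Function.Injective fun q : (Fin N → α) × (Fin (N + 1) → ℕ) => ofGaps q.1 q.2 := by
  rintro ⟨f, g⟩ ⟨f', g'⟩ h
  have h := congrArg toRuns h
  simp only [ofGaps, toRuns_ofRuns, Prod.mk.injEq, ofFn_inj, funext_iff] at h
  obtain ⟨h0, h⟩ := h
  refine Prod.ext (funext fun j => (h j).1) (funext fun j => ?_)
  cases j using Fin.cases with
  | zero => exact h0
  | succ j => exact (h j).2

lemma exists_ofGaps (s : List (Option α)) :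
    ∃ (N : ℕ) (f : Fin N → α) (g : Fin (N + 1) → ℕ), ofGaps f g = s := by
  refine ⟨(toRuns s).2.length, fun j => ((toRuns s).2.get j).1,
    Fin.cons (toRuns s).1 fun j => ((toRuns s).2.get j).2, ?_⟩
  simpa [ofGaps] using ofRuns_toRuns s

variable (f : Fin N → α) (g : Fin (N + 1) → ℕ)

lemma count_some_ofGaps [DecidableEq α] (a : α) :
    (ofGaps f g).count (some a) = (ofFn f).count a := by
  simp [ofGaps, count_some_ofRuns, map_ofFn, Function.comp_def]

lemma count_none_ofGaps [DecidableEq α] : (ofGaps f g).count none = ∑ j, g j := by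
  simp [ofGaps, count_none_ofRuns, map_ofFn, Function.comp_def, sum_ofFn, Fin.sum_univ_succ]

lemma replicate_none_infix_ofGaps_iff (d : ℕ) :
    replicate d none <:+: ofGaps f g ↔ ∃ j, d ≤ g j := by
  simp [ofGaps, replicate_none_infix_ofRuns_iff, Fin.exists_fin_succ]

end List

namespace Nat

variable {α : Type*} [DecidableEq α] {s : Finset α} {f : α → ℕ} {a : α}

lemma sum_mul_multinomial_update_pred (ha : a ∈ s) (hfa : f a ≠ 0) :
    (∑ i ∈ s, f i) * multinomial s (Function.update f a (f a - 1)) = f a * multinomial s f := by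
  obtain ⟨k, hk⟩ := exists_eq_succ_of_ne_zero hfa
  have hrest : multinomial (s.erase a) (Function.update f a k) = multinomial (s.erase a) f :=
    multinomial_congr fun i hi => Function.update_of_ne (ne_of_mem_erase hi) _ _
  rw [← insert_erase ha, multinomial_insert (notMem_erase a s),
    multinomial_insert (notMem_erase a s), sum_insert (notMem_erase a s), hk,
    Function.update_self, succ_sub_one, hrest, sum_congr rfl fun i hi =>
      Function.update_of_ne (ne_of_mem_erase hi) k f, succ_eq_add_one, add_right_comm,
    ← mul_assoc, add_one_mul_choose_eq]
  ring

lemma sum_multinomial_update_pred (hs : ∑ i ∈ s, f i ≠ 0) :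
    ∑ a ∈ s with f a ≠ 0, multinomial s (Function.update f a (f a - 1)) =
      multinomial s f := by
  refine Nat.eq_of_mul_eq_mul_left (Nat.pos_of_ne_zero hs) ?_
  rw [mul_sum, sum_congr rfl fun a ha => sum_mul_multinomial_update_pred (mem_filter.1 ha).1
    (mem_filter.1 ha).2, ← sum_mul, sum_filter_ne_zero]

end Nat

theorem card_filter_count_ofFn_eq_multinomial {α : Type*} [Fintype α] [DecidableEq α]
    (N : ℕ) (n : α → ℕ) (hN : ∑ a, n a = N) :
    #{f : Fin N → α | ∀ a, (List.ofFn f).count a = n a} = Nat.multinomial univ n := by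
  induction N generalizing n with
  | zero =>
    obtain rfl : n = 0 := funext fun a => sum_eq_zero_iff.1 hN a (mem_univ a)
    simp [Nat.multinomial]
  | succ N ih =>
    have step (a : α) : #{f : Fin N → α | ∀ b, (a :: List.ofFn f).count b = n b} =
        if n a ≠ 0 then Nat.multinomial univ (Function.update n a (n a - 1)) else 0 := by
      split_ifs with ha
      · simp_rw [List.count_cons_eq_iff_count_eq_update ha]
        refine ih _ ?_
        have := add_sum_erase univ n (mem_univ a)
        rw [sum_update_of_mem (mem_univ a), sdiff_singleton_eq_erase]
        omega
      · refine card_eq_zero.2 (filter_eq_empty_iff.2 fun f _ h => ?_)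
        have := h a
        rw [List.count_cons_self] at this
        omega
    rw [card_filter, ← (Fin.consEquiv fun _ => α).sum_comp, Fintype.sum_prod_type]
    simp only [Fin.consEquiv_apply, List.ofFn_succ, Fin.cons_zero, Fin.cons_succ]
    rw [sum_congr rfl fun a _ => (card_filter _ _).symm.trans (step a), ← sum_filter]
    exact Nat.sum_multinomial_update_pred (hN ▸ N.succ_ne_zero)

namespace Finset.Nat

lemma card_antidiagonalTuple (k n : ℕ) : #(antidiagonalTuple k n) = (k + n - 1).choose n := by
  rw [card_eq_of_equiv_fintype ((Equiv.subtypeEquivRight fun _ => mem_antidiagonalTuple).trans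
    (Sym.equivNatSumOfFintype (Fin k) n).symm), Sym.card_sym_eq_choose, Fintype.card_fin]

lemma filter_forall_le_antidiagonalTuple {k E : ℕ} (c : Fin k → ℕ) (hc : ∑ j, c j ≤ E) :
    {g ∈ antidiagonalTuple k E | ∀ j, c j ≤ g j} =
      (antidiagonalTuple k (E - ∑ j, c j)).map (addLeftEmbedding c) := by
  ext g
  simp only [mem_filter, mem_antidiagonalTuple, mem_map, addLeftEmbedding_apply]
  constructor
  · rintro ⟨hg, hcg⟩
    refine ⟨g - c, ?_, add_tsub_cancel_of_le hcg⟩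
    rw [← hg, ← sum_tsub_distrib _ fun j _ => hcg j]
    rfl
  · rintro ⟨h, hh, rfl⟩
    refine ⟨?_, fun j => Nat.le_add_right _ _⟩
    rw [Pi.add_def, sum_add_distrib, hh]
    omega

lemma card_filter_forall_mem_le_antidiagonalTuple (N E d : ℕ) (t : Finset (Fin (N + 1))) :
    (#{g ∈ antidiagonalTuple (N + 1) E | ∀ j ∈ t, d ≤ g j} : ℤ) =
      intChoose ((E : ℤ) + N - #t * d) N := by
  set c : Fin (N + 1) → ℕ := fun j => if j ∈ t then d else 0
  have hc : ∑ j, c j = #t * d := by simp [c, sum_ite_mem]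
  have hct (g : Fin (N + 1) → ℕ) : (∀ j ∈ t, d ≤ g j) ↔ ∀ j, c j ≤ g j := by
    refine ⟨fun h j => ?_, fun h j hj => by simpa [c, hj] using h j⟩
    by_cases hj : j ∈ t <;> simp [c, hj, h]
  simp_rw [hct]
  by_cases h : #t * d ≤ E
  · have htoNat : ((E : ℤ) + N - #t * d).toNat = E - #t * d + N := by omega
    rw [filter_forall_le_antidiagonalTuple c (hc ▸ h), card_map, card_antidiagonalTuple, hc,
      intChoose, if_neg (by omega), htoNat,
      show N + 1 + (E - #t * d) - 1 = E - #t * d + N by omega, Nat.choose_symm_add]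
  · have hempty : {g ∈ antidiagonalTuple (N + 1) E | ∀ j, c j ≤ g j} = ∅ := by
      refine filter_eq_empty_iff.2 fun g hg hcg => h ?_
      rw [← hc, ← mem_antidiagonalTuple.1 hg]
      exact sum_le_sum fun j _ => hcg j
    rw [hempty, card_empty, intChoose]
    split_ifs
    · rfl
    · rw [Nat.choose_eq_zero_of_lt (by omega), Nat.cast_zero]

lemma card_filter_exists_le_antidiagonalTuple (N E d : ℕ) :
    (#{g ∈ antidiagonalTuple (N + 1) E | ∃ j, d ≤ g j} : ℤ) =
      ∑ i ∈ Icc 1 (N + 1), (-1 : ℤ) ^ (i + 1) * ((N + 1).choose i : ℤ) *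
        intChoose ((E : ℤ) + N - i * d) N := by
  set S : Fin (N + 1) → Finset (Fin (N + 1) → ℕ) := fun j =>
    {g ∈ antidiagonalTuple (N + 1) E | d ≤ g j}
  -- `f 0 = 0` discards the empty intersection when the sum is taken over all subsets
  set f : ℕ → ℤ := fun m =>
    if m = 0 then 0 else (-1) ^ (m + 1) * intChoose ((E : ℤ) + N - m * d) N
  have hunion : {g ∈ antidiagonalTuple (N + 1) E | ∃ j, d ≤ g j} = univ.biUnion S := by
    ext g
    simp [S]
  have hterm (t : Finset (Fin (N + 1))) (ht : t.Nonempty) :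
      (-1 : ℤ) ^ (#t + 1) * #(t.inf' ht S) = f #t := by
    have hinf : t.inf' ht S = {g ∈ antidiagonalTuple (N + 1) E | ∀ j ∈ t, d ≤ g j} := by
      ext g
      simp only [mem_inf', mem_filter, S]
      exact ⟨fun h => ⟨(h _ ht.choose_spec).1, fun j hj => (h j hj).2⟩,
        fun h j hj => ⟨h.1, h.2 j hj⟩⟩
    rw [hinf, card_filter_forall_mem_le_antidiagonalTuple]
    exact (if_neg (card_pos.2 ht).ne').symm
  have hrange : range (N + 1 + 1) = insert 0 (Icc 1 (N + 1)) := by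
    ext i
    simp only [mem_range, mem_insert, mem_Icc]
    omega
  rw [hunion, inclusion_exclusion_card_biUnion, sum_coe_sort_eq_attach,
    sum_congr rfl fun t _ => hterm t.1 _, sum_attach _ fun t => f #t,
    sum_filter_of_ne fun t _ ht => nonempty_iff_ne_empty.2 fun h => ht (by simp [h, f]),
    sum_powerset_apply_card, card_univ, Fintype.card_fin, hrange, sum_insert (by simp)]
  refine (congrArg₂ (· + ·) (by simp [f]) (sum_congr rfl fun i hi => ?_)).trans (zero_add _)
  have hi : 1 ≤ i := (mem_Icc.1 hi).1
  simp only [f, if_neg (show i ≠ 0 by omega), nsmul_eq_mul]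
  ring

end Finset.Nat

section

variable {α : Type*} [Fintype α] [DecidableEq α]

def nonblockingPatternStates (n : α → ℕ) (E d : ℕ) : Finset (List (Option α)) :=
  ((univ.filter fun f : Fin (∑ a, n a) → α => ∀ a, (List.ofFn f).count a = n a) ×ˢ
    {g ∈ Nat.antidiagonalTuple (∑ a, n a + 1) E | ∃ j, d ≤ g j}).image
    fun q => List.ofGaps q.1 q.2

lemma mem_nonblockingPatternStates_iff {n : α → ℕ} {E d : ℕ} {s : List (Option α)} :
    s ∈ nonblockingPatternStates n E d ↔
      (∀ a, s.count (some a) = n a) ∧ s.count none = E ∧ List.replicate d none <:+: s := by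
  unfold nonblockingPatternStates
  generalize hN : ∑ a, n a = N
  constructor
  · intro hs
    obtain ⟨⟨f, g⟩, hq, rfl⟩ := mem_image.1 hs
    simp only [mem_product, mem_filter, mem_univ, true_and, Nat.mem_antidiagonalTuple] at hq
    simp only [List.count_some_ofGaps, List.count_none_ofGaps, List.replicate_none_infix_ofGaps_iff]
    exact ⟨hq.1, hq.2⟩
  · rintro ⟨hsome, hnone, hrun⟩
    obtain ⟨M, f, g, rfl⟩ := List.exists_ofGaps s
    simp only [List.count_some_ofGaps, List.count_none_ofGaps,
      List.replicate_none_infix_ofGaps_iff] at hsome hnone hrun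
    obtain rfl : M = N := by
      rw [← hN, ← List.length_ofFn (f := f), ← List.sum_count_eq_length,
        sum_congr rfl fun a _ => hsome a]
    exact mem_image.2 ⟨(f, g), by simp [hsome, hnone, hrun, Nat.mem_antidiagonalTuple], rfl⟩

lemma pairwiseDisjoint_nonblockingPatternStates (P : Set (α → ℕ)) (E d : ℕ) :
    P.PairwiseDisjoint fun n => nonblockingPatternStates n E d := by
  intro n _ n' _ hne
  refine disjoint_left.2 fun s hs hs' => hne (funext fun a => ?_)
  rw [mem_nonblockingPatternStates_iff] at hs hs'
  exact (hs.1 a).symm.trans (hs'.1 a)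

lemma card_nonblockingPatternStates (n : α → ℕ) (E d : ℕ) :
    #(nonblockingPatternStates n E d) =
      Nat.multinomial univ n *
        #{g ∈ Nat.antidiagonalTuple (∑ a, n a + 1) E | ∃ j, d ≤ g j} := by
  rw [nonblockingPatternStates, card_image_of_injective _ List.ofGaps_injective, card_product,
    card_filter_count_ofFn_eq_multinomial _ n rfl]

end

section

variable {T : ℕ} (dem : Fin T → ℕ)

lemma sum_map_tokenOcc (s : List (Token T)) :
    (s.map (tokenOcc dem)).sum = ∑ t, s.count (some t) * dem t := by
  simp [List.sum_map_eq_count_none_add, tokenOcc]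

lemma sum_map_tokenWeight (s : List (Token T)) :
    (s.map (tokenWeight dem)).sum = s.count none + ∑ t, s.count (some t) * dem t := by
  simp [List.sum_map_eq_count_none_add, tokenWeight]

end

lemma setOf_nonblocking_eq_biUnion {T : ℕ} {dem : Fin T → ℕ} (hdem : ∀ t, 1 ≤ dem t)
    {C x : ℕ} (hx : x ≤ C) (d : ℕ) :
    {s : List (Token T) | (s.map (tokenWeight dem)).sum = C ∧
        (s.map (tokenOcc dem)).sum = x ∧ List.replicate d none <:+: s} =
      ↑({n ∈ Fintype.piFinset fun _ : Fin T => range (C + 1) | ∑ t, n t * dem t = x}.biUnion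
        fun n => nonblockingPatternStates n (C - x) d) := by
  ext s
  simp only [Set.mem_ofPred_eq, coe_biUnion, Set.mem_iUnion, mem_coe,
    mem_nonblockingPatternStates_iff, exists_prop, sum_map_tokenOcc, sum_map_tokenWeight]
  constructor
  · rintro ⟨hw, ho, hrun⟩
    refine ⟨fun t => s.count (some t), ?_, fun _ => rfl, by omega, hrun⟩
    refine mem_filter.2 ⟨Fintype.mem_piFinset.2 fun t => mem_range.2 ?_, ho⟩
    have := (Nat.le_mul_of_pos_right _ (hdem t)).trans
      (single_le_sum (fun i _ => Nat.zero_le (s.count (some i) * dem i)) (mem_univ t))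
    omega
  · rintro ⟨n, hn, hcount, hnone, hrun⟩
    have hocc : ∑ t, s.count (some t) * dem t = x := by
      simpa only [hcount] using (mem_filter.1 hn).2
    exact ⟨by omega, hocc, hrun⟩

theorem nonblocking_states_with_occupancy_count_general
    (C T x : ℕ) (dem : Fin T → ℕ) (hdem : ∀ t, 1 ≤ dem t) (hx : x ≤ C)
    (d : ℕ) :
    ({s : List (Token T) |
        (s.map (tokenWeight dem)).sum = C ∧
        (s.map (tokenOcc dem)).sum = x ∧
        List.replicate d (none : Token T) <:+: s}.ncard : ℤ)
      = ∑ n ∈ (Fintype.piFinset fun _ : Fin T => Finset.range (C + 1)).filter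
            (fun n => ∑ t, n t * dem t = x),
          (Nat.multinomial Finset.univ n : ℤ) *
            ∑ i ∈ Finset.Icc 1 ((∑ t, n t) + 1),
              (-1 : ℤ) ^ (i + 1) * (((∑ t, n t) + 1).choose i : ℤ) *
                intChoose (((C - x : ℕ) : ℤ) + (∑ t, n t : ℕ)
                    - (i : ℤ) * (d : ℤ)) (∑ t, n t) := by
  rw [setOf_nonblocking_eq_biUnion hdem hx, Set.ncard_coe_finset,
    card_biUnion (pairwiseDisjoint_nonblockingPatternStates _ _ _), Nat.cast_sum]
  refine sum_congr rfl fun n _ => ?_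
  rw [card_nonblockingPatternStates, Nat.cast_mul, Nat.card_filter_exists_le_antidiagonalTuple]

/-- Theorem 2 of the paper: for `0 ≤ x ≤ C` and a demand `d ≥ 1`, the
number of non-blocking exact link states with occupancy `x` (those containing a run of
at least `d` consecutive free tokens) equals `∑_n (N(n)! / ∏_t (n t)!) * W(n)`, the sum
over all patterns `n` with `∑ t, n t * dem t = x`, where `N(n) = ∑ t, n t`, `E = C - x`
and `W(n) = ∑_{i=1}^{N(n)+1} (-1)^{i+1} * C(N(n)+1, i) * C(E + N(n) - i·d, N(n))`.
(Since every demand is at least 1, every such pattern satisfies `n t ≤ C`, so the sum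
over all patterns in `ℕ^T` is realized as a sum over `n` with `n t < C + 1`.) -/
theorem nonblocking_states_with_occupancy_count
    (C T x : ℕ) (dem : Fin T → ℕ) (hdem : ∀ t, 1 ≤ dem t) (hx : x ≤ C)
    (d : ℕ) (hd : 1 ≤ d) :
    ({s : List (Token T) |
        (s.map (tokenWeight dem)).sum = C ∧
        (s.map (tokenOcc dem)).sum = x ∧
        List.replicate d (none : Token T) <:+: s}.ncard : ℤ)
      = ∑ n ∈ (Fintype.piFinset fun _ : Fin T => Finset.range (C + 1)).filter
            (fun n => ∑ t, n t * dem t = x),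
          (Nat.multinomial Finset.univ n : ℤ) *
            ∑ i ∈ Finset.Icc 1 ((∑ t, n t) + 1),
              (-1 : ℤ) ^ (i + 1) * (((∑ t, n t) + 1).choose i : ℤ) *
                intChoose (((C - x : ℕ) : ℤ) + (∑ t, n t : ℕ)
                    - (i : ℤ) * (d : ℤ)) (∑ t, n t) :=
  nonblocking_states_with_occupancy_count_general C T x dem hdem hx d
end

section
/- Let C, n, d ∈ ℕ with 1 ≤ d ≤ C. The number of n-element subsets S of {1, …, C} that contain d consecutive integers (i.e., there exists j with {j, j+1, …, j+d−1} ⊆ S) equals Σ_{i=1}^{C−n+1} (−1)^{i+1} · C(C−n+1, i) · C(C − i·d, C − n), where C − i·d is interpreted as an integer and a binomial coefficient whose upper argument is negative or less than its lower argument is taken to be 0. (Dividing by C(C, n), this is the paper's uniform-approximation acceptance probability p_k^{Uni}: the probability that a uniformly random n-element set of free slice positions on a C-slice link contains d contiguous free slices.) -/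
open Finset

theorem Nat.exists_lt_le_succ_of_lt_of_le {α : Type*} [LinearOrder α] (f : ℕ → α) {x : α} {n : ℕ}
    (h₀ : f 0 < x) (hn : x ≤ f n) : ∃ i < n, f i < x ∧ x ≤ f (i + 1) := by
  induction n with
  | zero => exact absurd hn (not_le.2 h₀)
  | succ n ih =>
    by_cases hx : x ≤ f n
    · obtain ⟨i, hi, h⟩ := ih hx
      exact ⟨i, by omega, h⟩
    · exact ⟨n, by omega, not_le.1 hx, hn⟩

theorem StrictMono.eq_of_image_range_eq {β : Type*} [LinearOrder β] {f g : ℕ → β}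
    (hf : StrictMono f) (hg : StrictMono g) {m : ℕ} (h : (range m).image f = (range m).image g) :
    ∀ j < m, f j = g j := by
  have hrange : ∀ φ : ℕ → β, Set.range (fun j : Fin m ↦ φ j) = ↑((range m).image φ) := by
    intro φ; ext x; simp [Fin.exists_iff]
  have key := ((hf.comp (Fin.val_strictMono (n := m))).range_inj
    (hg.comp (Fin.val_strictMono (n := m)))).1 (by simp only [Function.comp_def, hrange, h])
  intro j hj
  exact congrFun key ⟨j, hj⟩

theorem Finset.sum_filter_nonempty_powerset_apply_card {β M : Type*} [AddCommMonoid M]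
    (s : Finset β) (f : ℕ → M) :
    ∑ T ∈ s.powerset with T.Nonempty, f #T = ∑ i ∈ Icc 1 #s, (#s).choose i • f i := by
  have h := sum_powerset_apply_card (fun m ↦ if m = 0 then 0 else f m) (x := s)
  have hT (T : Finset β) : (if T.Nonempty then f #T else 0) = if #T = 0 then 0 else f #T := by
    simp only [← card_pos, Nat.pos_iff_ne_zero, ite_not]
  rw [sum_filter, sum_congr rfl fun T _ ↦ hT T, h, range_eq_Ico, sum_eq_sum_Ico_succ_bot (by omega),
    if_pos rfl, smul_zero, zero_add]
  refine sum_congr (by ext; simp) fun i hi ↦ ?_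
  rw [if_neg (by simp at hi; omega)]

theorem Finset.card_filter_le_finsuppAntidiag {ι : Type*} [DecidableEq ι] {s : Finset ι}
    {c : ι →₀ ℕ} (hc : c.support ⊆ s) {n : ℕ} (hcn : s.sum c ≤ n) :
    #{a ∈ s.finsuppAntidiag n | c ≤ a} = #(s.finsuppAntidiag (n - s.sum c)) := by
  refine card_nbij' (· - c) (· + c) ?_ ?_ ?_ ?_
  · intro a ha
    simp only [coe_filter, mem_finsuppAntidiag, Set.mem_ofPred_eq, mem_coe] at ha ⊢
    obtain ⟨⟨hsum, hsupp⟩, hca⟩ := ha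
    refine ⟨?_, Finsupp.support_tsub.trans hsupp⟩
    simp only [Finsupp.coe_tsub, Pi.sub_apply]
    rw [sum_tsub_distrib _ (fun i _ ↦ hca i), hsum]
  · intro b hb
    simp only [coe_filter, mem_finsuppAntidiag, Set.mem_ofPred_eq, mem_coe] at hb ⊢
    obtain ⟨hsum, hsupp⟩ := hb
    refine ⟨⟨?_, Finsupp.support_add.trans (union_subset hsupp hc)⟩, le_add_self⟩
    simp only [Finsupp.coe_add, Pi.add_apply]
    rw [sum_add_distrib, hsum]
    exact Nat.sub_add_cancel hcn
  · intro a ha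
    exact tsub_add_cancel_of_le (mem_filter.1 ha).2
  · intro b _
    exact add_tsub_cancel_right b c

namespace Gaps

variable {k t d : ℕ} {a : ℕ →₀ ℕ}

/-- Reading a gap vector `a` as the word `1^(a 0) 0 1^(a 1) 0 ⋯ 0 1^(a k)` written on the positions
`1, …, t + k`, the `0`s sit at `separator a 1, …, separator a k`; `separator a 0 = 0` and
`separator a (k + 1) = t + k + 1` are sentinels. -/
def separator (a : ℕ →₀ ℕ) (j : ℕ) : ℕ := j + ∑ i ∈ range j, a i

@[simp] lemma separator_zero : separator a 0 = 0 := by simp [separator]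

lemma separator_succ (j : ℕ) : separator a (j + 1) = separator a j + a j + 1 := by
  simp only [separator, sum_range_succ]; ring

lemma strictMono_separator : StrictMono (separator a) :=
  strictMono_nat_of_lt_succ fun j ↦ by rw [separator_succ]; omega

lemma separator_last (ha : a ∈ (range (k + 1)).finsuppAntidiag t) :
    separator a (k + 1) = t + k + 1 := by
  rw [separator, (mem_finsuppAntidiag.1 ha).1]; ring

def separators (k : ℕ) (a : ℕ →₀ ℕ) : Finset ℕ := (range (k + 2)).image (separator a)

lemma separators_subset (ha : a ∈ (range (k + 1)).finsuppAntidiag t) :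
    separators k a ⊆ range (t + k + 2) := by
  refine image_subset_iff.2 fun j hj ↦ mem_range.2 ?_
  have := (strictMono_separator (a := a)).monotone (mem_range_succ_iff.1 hj)
  rw [separator_last ha] at this
  omega

def freeSet (k t : ℕ) (a : ℕ →₀ ℕ) : Finset ℕ := range (t + k + 2) \ separators k a

lemma mem_freeSet {x : ℕ} :
    x ∈ freeSet k t a ↔ x < t + k + 2 ∧ ∀ j < k + 2, separator a j ≠ x := by
  simp [freeSet, separators]

lemma freeSet_mem_powersetCard (ha : a ∈ (range (k + 1)).finsuppAntidiag t) :
    freeSet k t a ∈ powersetCard t (Icc 1 (t + k)) := by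
  refine mem_powersetCard.2 ⟨fun x hx ↦ ?_, ?_⟩
  · obtain ⟨hx, hsep⟩ := mem_freeSet.1 hx
    have h₀ := hsep 0 (by omega)
    have h₁ := hsep (k + 1) (by omega)
    rw [separator_zero] at h₀
    rw [separator_last ha] at h₁
    exact mem_Icc.2 ⟨by omega, by omega⟩
  · rw [freeSet, card_sdiff_of_subset (separators_subset ha), separators,
      card_image_of_injective _ strictMono_separator.injective, card_range, card_range]
    omega

lemma injOn_freeSet : Set.InjOn (freeSet k t) ((range (k + 1)).finsuppAntidiag t) := by
  intro a ha a' ha' h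
  have hsep : separators k a = separators k a' := by
    rw [← Finset.sdiff_sdiff_eq_self (separators_subset ha),
      ← Finset.sdiff_sdiff_eq_self (separators_subset ha')]
    exact congrArg (range (t + k + 2) \ ·) h
  have hj := strictMono_separator.eq_of_image_range_eq strictMono_separator hsep
  ext i
  by_cases hi : i < k + 1
  · have h₀ := hj i (by omega)
    have h₁ := hj (i + 1) (by omega)
    rw [separator_succ, separator_succ] at h₁
    omega
  · have hs := (mem_finsuppAntidiag.1 ha).2
    have hs' := (mem_finsuppAntidiag.1 ha').2
    rw [Finsupp.notMem_support_iff.1 fun h ↦ hi (mem_range.1 (hs h)),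
      Finsupp.notMem_support_iff.1 fun h ↦ hi (mem_range.1 (hs' h))]

lemma image_freeSet :
    ((range (k + 1)).finsuppAntidiag t).image (freeSet k t) = powersetCard t (Icc 1 (t + k)) := by
  refine eq_of_subset_of_card_le (image_subset_iff.2 fun a ha ↦ freeSet_mem_powersetCard ha) ?_
  rw [card_image_of_injOn injOn_freeSet, card_finsuppAntidiag_nat_eq_choose, card_powersetCard,
    Nat.card_Icc, card_range]
  exact le_of_eq (by congr 1; omega)

lemma exists_Ico_subset_freeSet_iff (hd : 1 ≤ d) (ha : a ∈ (range (k + 1)).finsuppAntidiag t) :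
    (∃ j, Ico j (j + d) ⊆ freeSet k t a) ↔ ∃ i ∈ range (k + 1), d ≤ a i := by
  have hmono := strictMono_separator (a := a)
  constructor
  · rintro ⟨j, hrun⟩
    obtain ⟨hj, hjsep⟩ := mem_freeSet.1 (hrun (left_mem_Ico.2 (by omega)))
    have h₀ := hjsep 0 (by omega)
    rw [separator_zero] at h₀
    obtain ⟨i, hi, hij, hji⟩ := Nat.exists_lt_le_succ_of_lt_of_le (separator a) (n := k + 1)
      (by rwa [separator_zero, pos_iff_ne_zero, ne_comm]) (by rw [separator_last ha]; omega)
    have hend : separator a (i + 1) ∉ Ico j (j + d) := fun h ↦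
      (mem_freeSet.1 (hrun h)).2 (i + 1) (by omega) rfl
    rw [mem_Ico] at hend
    rw [separator_succ] at hend hji
    exact ⟨i, mem_range.2 hi, by omega⟩
  · rintro ⟨i, hi, hdi⟩
    refine ⟨separator a i + 1, fun x hx ↦ mem_freeSet.2 ⟨?_, fun j _ hjx ↦ ?_⟩⟩
    · have := hmono.monotone (Nat.succ_le_of_lt (mem_range.1 hi))
      rw [separator_last ha, separator_succ] at this
      rw [mem_Ico] at hx
      omega
    · rw [mem_Ico] at hx
      rcases le_or_gt j i with hji | hij
      · have := hmono.monotone hji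
        omega
      · have := hmono.monotone (Nat.succ_le_of_lt hij)
        rw [separator_succ] at this
        omega

lemma card_filter_forall_le {T : Finset ℕ} (hT : T ⊆ range (k + 1)) :
    (#{a ∈ (range (k + 1)).finsuppAntidiag t | ∀ i ∈ T, d ≤ a i} : ℤ) =
      intChoose (t + k - #T * d) k := by
  set c : ℕ →₀ ℕ := Finsupp.indicator T fun _ _ ↦ d
  have hc (a : ℕ →₀ ℕ) : c ≤ a ↔ ∀ i ∈ T, d ≤ a i := by
    simp only [c, Finsupp.le_def, Finsupp.indicator_apply]
    exact ⟨fun h i hi ↦ by simpa [hi] using h i, fun h i ↦ by split_ifs with hi <;> simp [h, hi]⟩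
  have hsum : (range (k + 1)).sum c = #T * d := by
    rw [← sum_subset hT fun i _ hi ↦ Finsupp.indicator_of_notMem hi _,
      sum_congr rfl fun i hi ↦ Finsupp.indicator_of_mem hi _, sum_const, smul_eq_mul]
  rcases le_or_gt (#T * d) t with h | h
  · rw [filter_congr fun a _ ↦ (hc a).symm,
      card_filter_le_finsuppAntidiag ((Finsupp.support_indicator_subset ..).trans hT) (hsum ▸ h),
      card_finsuppAntidiag_nat_eq_choose, hsum, intChoose, if_neg (by omega),
      card_range, show (t + k - #T * d : ℤ).toNat = t - #T * d + k by omega,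
      show k + 1 + (t - #T * d) - 1 = t - #T * d + k by omega, Nat.choose_symm_add]
  · rw [filter_eq_empty_iff.2 fun a ha hle ↦ ?_, card_empty, intChoose]
    · split_ifs
      · rfl
      · rw [Nat.choose_eq_zero_of_lt (by omega), Nat.cast_zero]
    · have := sum_le_sum fun i (_ : i ∈ range (k + 1)) ↦ (hc a).2 hle i
      rw [hsum, (mem_finsuppAntidiag.1 ha).1] at this
      omega

lemma card_filter_exists_le :
    (#{a ∈ (range (k + 1)).finsuppAntidiag t | ∃ i ∈ range (k + 1), d ≤ a i} : ℤ) =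
      ∑ i ∈ Icc 1 (k + 1),
        (-1) ^ (i + 1) * ((k + 1).choose i : ℤ) * intChoose (t + k - i * d) k := by
  set A := (range (k + 1)).finsuppAntidiag t
  have hunion : {a ∈ A | ∃ i ∈ range (k + 1), d ≤ a i} =
      (range (k + 1)).biUnion fun i ↦ {a ∈ A | d ≤ a i} := by
    ext a; simp only [mem_filter, mem_biUnion]; tauto
  have hinter (T : Finset ℕ) (hne : T.Nonempty) :
      T.inf' hne (fun i ↦ {a ∈ A | d ≤ a i}) = {a ∈ A | ∀ i ∈ T, d ≤ a i} := by
    ext a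
    rw [mem_inf', mem_filter]
    obtain ⟨i₀, hi₀⟩ := hne
    simp only [mem_filter]
    exact ⟨fun h ↦ ⟨(h i₀ hi₀).1, fun i hi ↦ (h i hi).2⟩, fun h i hi ↦ ⟨h.1, h.2 i hi⟩⟩
  rw [hunion, inclusion_exclusion_card_biUnion]
  calc _ = ∑ T ∈ (range (k + 1)).powerset with T.Nonempty,
          (-1) ^ (#T + 1) * intChoose (t + k - #T * d) k := by
        refine (sum_congr rfl fun T _ ↦ ?_).trans (sum_coe_sort _ _)
        obtain ⟨hT, hne⟩ := mem_filter.1 T.2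
        rw [hinter T hne, card_filter_forall_le (mem_powerset.1 hT)]
    _ = _ := by
      rw [sum_filter_nonempty_powerset_apply_card _
        fun m ↦ (-1) ^ (m + 1) * intChoose (t + k - m * d) k, card_range]
      refine sum_congr rfl fun i _ ↦ ?_
      rw [nsmul_eq_mul]
      ring

end Gaps

theorem subsets_with_d_consecutive_count_general
    (C n d : ℕ) (hd : 1 ≤ d) (hn : n ≤ C) :
    ({S : Finset ℕ | S ⊆ Finset.Icc 1 C ∧ S.card = n ∧
        ∃ j, Finset.Icc j (j + d - 1) ⊆ S}.ncard : ℤ)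
      = ∑ i ∈ Finset.Icc 1 (C - n + 1),
          (-1 : ℤ) ^ (i + 1) * ((C - n + 1).choose i : ℤ) *
            intChoose ((C : ℤ) - (i : ℤ) * (d : ℤ)) (C - n) := by
  classical
  obtain ⟨k, rfl⟩ : ∃ k, C = n + k := ⟨C - n, by omega⟩
  have hIcc (j : ℕ) : Icc j (j + d - 1) = Ico j (j + d) := by
    ext; simp only [mem_Icc, mem_Ico]; omega
  have hset : {S : Finset ℕ | S ⊆ Icc 1 (n + k) ∧ #S = n ∧ ∃ j, Icc j (j + d - 1) ⊆ S} =
      ↑{S ∈ powersetCard n (Icc 1 (n + k)) | ∃ j, Ico j (j + d) ⊆ S} := by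
    ext S; simp [hIcc, and_assoc]
  rw [hset, Set.ncard_coe_finset, ← Gaps.image_freeSet, filter_image,
    card_image_of_injOn (Gaps.injOn_freeSet.mono (filter_subset _ _)),
    filter_congr fun a ha ↦ Gaps.exists_Ico_subset_freeSet_iff hd ha, Gaps.card_filter_exists_le,
    Nat.add_sub_cancel_left, Nat.cast_add]

/-- for `1 ≤ d ≤ C` and `n ≤ C` free slices, the number of `n`-element
subsets `S` of `{1, …, C}` containing `d` consecutive integers (i.e. `∃ j` with
`{j, j+1, …, j+d-1} ⊆ S`) equals
`∑_{i=1}^{C-n+1} (-1)^{i+1} * C(C-n+1, i) * C(C - i·d, C - n)`. -/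
theorem subsets_with_d_consecutive_count
    (C n d : ℕ) (hd : 1 ≤ d) (hdC : d ≤ C) (hn : n ≤ C) :
    ({S : Finset ℕ | S ⊆ Finset.Icc 1 C ∧ S.card = n ∧
        ∃ j, Finset.Icc j (j + d - 1) ⊆ S}.ncard : ℤ)
      = ∑ i ∈ Finset.Icc 1 (C - n + 1),
          (-1 : ℤ) ^ (i + 1) * ((C - n + 1).choose i : ℤ) *
            intChoose ((C : ℤ) - (i : ℤ) * (d : ℤ)) (C - n) :=
  subsets_with_d_consecutive_count_general C n d hd hn
end
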